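/- Let k ≥ 1 and n ≥ 5 with k ≤ n/2. Every min-saturated convex precolored Θ^k-drawing of a graph G on n vertices has at most (k+4)(n−2)/2 edges, i.e., 2·|E(G)| ≤ (k+4)(n−2). -/

import Mathlib

/-- Points of the plane. -/
abbrev Pt : Type := ℝ × ℝ

/-- Two straight-line segments cross if some point lies in the interior
(open segment) of both. -/
def SegCross (a b c d : Pt) : Prop :=
  ∃ x : Pt, x ∈ openSegment ℝ a b ∧ x ∈ openSegment ℝ c d

/-- Two edges (unordered pairs of vertices) cross in the drawing `p`. -/
def EdgeCross {V : Type} (p : V → Pt) (e f : Sym2 V) : Prop :=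
  ∃ u v x y : V, e = s(u, v) ∧ f = s(x, y) ∧ SegCross (p u) (p v) (p x) (p y)

/-- The drawing `p` is injective and no three vertex points are collinear. -/
def GenPos {V : Type} (p : V → Pt) : Prop :=
  Function.Injective p ∧
    ∀ u v w : V, u ≠ v → u ≠ w → v ≠ w → ¬ Collinear ℝ ({p u, p v, p w} : Set Pt)

/-- The vertex points are in convex position: every vertex point is an extreme
point of the convex hull of all vertex points. -/
def ConvexPos {V : Type} (p : V → Pt) : Prop :=
  ∀ v : V, p v ∈ Set.extremePoints ℝ (convexHull ℝ (Set.range p))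

/-- A `k`-coloring of the edges of `G` is crossing-free if no two distinct
edges of the same color cross. -/
def CrossingFree {V : Type} {k : ℕ} (G : SimpleGraph V) (p : V → Pt)
    (φ : Sym2 V → Fin k) : Prop :=
  ∀ e ∈ G.edgeSet, ∀ f ∈ G.edgeSet, e ≠ f → φ e = φ f → ¬ EdgeCross p e f

open scoped Classical

/-- A precolored drawing `(G, p, φ)` is saturated: for every pair of distinct
non-adjacent vertices and every color `c`, assigning color `c` to the new edge
`uv` yields a coloring that is not crossing-free. -/
def PrecoloredSaturated {V : Type} {k : ℕ} (G : SimpleGraph V) (p : V → Pt)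
    (φ : Sym2 V → Fin k) : Prop :=
  ∀ u v : V, u ≠ v → ¬ G.Adj u v → ∀ c : Fin k,
    ¬ CrossingFree (G ⊔ SimpleGraph.fromEdgeSet {s(u, v)}) p
      (fun e => if e = s(u, v) then c else φ e)

/-- A (non-precolored) drawing of `G` is saturated for thickness `k`: for every
pair of distinct non-adjacent vertices `u, v`, the drawing of `G + uv` admits
no crossing-free `k`-coloring. -/
def Saturated {V : Type} (k : ℕ) (G : SimpleGraph V) (p : V → Pt) : Prop :=
  ∀ u v : V, u ≠ v → ¬ G.Adj u v →
    ∀ φ : Sym2 V → Fin k,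
      ¬ CrossingFree (G ⊔ SimpleGraph.fromEdgeSet {s(u, v)}) p φ

/-- Twice the signed area of the triangle `a b c`. -/
def det2 (a b c : Pt) : ℝ :=
  (b.1 - a.1) * (c.2 - a.2) - (b.2 - a.2) * (c.1 - a.1)

/-- An edge is an outer edge if its endpoints are consecutive on the boundary
of the convex hull of the vertex points, i.e. all other vertex points lie
strictly on one side of the line through its endpoints. -/
def IsOuterEdge {V : Type} (p : V → Pt) (e : Sym2 V) : Prop :=
  ∃ u v : V, e = s(u, v) ∧
    ((∀ w : V, w ≠ u → w ≠ v → 0 < det2 (p u) (p v) (p w)) ∨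
     (∀ w : V, w ≠ u → w ≠ v → det2 (p u) (p v) (p w) < 0))


/-!
By minimality it suffices to exhibit one saturated precoloured drawing in convex position with
few edges. Put vertex `i` at `(i, i²)` on the parabola, so that two chords cross exactly when their
endpoints interleave. For `k = 1` take a fan triangulation (`2n - 3` edges). For `k ≥ 2` take the
boundary of the `n`-gon and all chords whose vertex sum is `0, 1, …, k + 1` modulo `n`, coloured
by sum class. A missing chord crosses a chord of every sum class `1, …, k`, hence one of every
colour. A sum class contains at most `(n - 2) / 2` inner chords, and at most `(n - 3) / 2` when it
is odd, which gives `2 |E| ≤ 2n + (k + 2)(n - 3) + (k mod 2) ≤ (k + 4)(n - 2)`.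
-/

namespace SegCross

variable {a b c d : Pt}

theorem symm (h : SegCross a b c d) : SegCross c d a b :=
  let ⟨x, hab, hcd⟩ := h; ⟨x, hcd, hab⟩

theorem swap_left (h : SegCross a b c d) : SegCross b a c d :=
  let ⟨x, hab, hcd⟩ := h; ⟨x, openSegment_symm ℝ a b ▸ hab, hcd⟩

theorem swap_right (h : SegCross a b c d) : SegCross a b d c :=
  h.symm.swap_left.symm

end SegCross

theorem det2_lineMap (a b c d : Pt) (t : ℝ) :
    det2 a b ((1 - t) • c + t • d) = (1 - t) * det2 a b c + t * det2 a b d := by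
  simp only [det2, Prod.fst_add, Prod.snd_add, Prod.smul_fst, Prod.smul_snd, smul_eq_mul]
  ring

theorem det2_eq_zero_of_mem_openSegment {a b x : Pt} (hx : x ∈ openSegment ℝ a b) :
    det2 a b x = 0 := by
  obtain ⟨t, -, rfl⟩ := (openSegment_eq_image ℝ a b).subset hx
  rw [det2_lineMap]
  simp only [det2]
  ring

theorem det2_eq_zero_of_collinear {a b c : Pt} (h : Collinear ℝ ({a, b, c} : Set Pt)) :
    det2 a b c = 0 := by
  obtain ⟨w, hw⟩ := (collinear_iff_of_mem (Set.mem_insert a _)).1 h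
  obtain ⟨rb, rfl⟩ := hw b (by simp)
  obtain ⟨rc, rfl⟩ := hw c (by simp)
  simp only [det2, vadd_eq_add, Prod.fst_add, Prod.snd_add, Prod.smul_fst, Prod.smul_snd,
    smul_eq_mul]
  ring

theorem SegCross.det2_mul_nonpos {a b c d : Pt} (h : SegCross a b c d) :
    det2 c d a * det2 c d b ≤ 0 := by
  obtain ⟨x, hab, hcd⟩ := h
  obtain ⟨t, ⟨ht0, ht1⟩, rfl⟩ := (openSegment_eq_image ℝ a b).subset hab
  have h0 := det2_eq_zero_of_mem_openSegment hcd
  rw [det2_lineMap] at h0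
  have h1 : (1 - t) * (det2 c d a * det2 c d b) = -(t * det2 c d b ^ 2) := by
    linear_combination det2 c d b * h0
  nlinarith [sub_pos.2 ht1, mul_nonneg ht0.le (sq_nonneg (det2 c d b))]

theorem not_segCross_of_det2_ne_zero {a b d : Pt} (h : det2 a b d ≠ 0) : ¬ SegCross a b a d := by
  rintro ⟨x, hab, had⟩
  obtain ⟨t, ⟨ht0, -⟩, rfl⟩ := (openSegment_eq_image ℝ a d).subset had
  have h0 := det2_eq_zero_of_mem_openSegment hab
  rw [det2_lineMap] at h0
  have haa : det2 a b a = 0 := by simp only [det2]; ring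
  rw [haa] at h0
  exact h (by nlinarith)

theorem segCross_of_det2 {a b c d : Pt} (hc : det2 a b c < 0) (hd : 0 < det2 a b d)
    (ha : 0 < det2 c d a) (hb : det2 c d b < 0) : SegCross a b c d := by
  have hsum : det2 c d a - det2 c d b = det2 a b d - det2 a b c := by simp only [det2]; ring
  refine ⟨_, mem_openSegment_iff_div.2 ⟨-det2 c d b, det2 c d a, by linarith, ha, rfl⟩,
    mem_openSegment_iff_div.2 ⟨det2 a b d, -det2 a b c, hd, by linarith, ?_⟩⟩
  have hne : det2 a b d + -det2 a b c ≠ 0 := by linarith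
  rw [show -det2 c d b + det2 c d a = det2 a b d + -det2 a b c by linarith]
  ext <;> simp only [Prod.fst_add, Prod.snd_add, Prod.smul_fst, Prod.smul_snd, smul_eq_mul] <;>
    field_simp <;> simp only [det2] <;> ring

def parabolaPt (t : ℝ) : Pt := (t, t ^ 2)

theorem det2_parabolaPt (a b x : ℝ) :
    det2 (parabolaPt a) (parabolaPt b) (parabolaPt x) = (b - a) * (x - a) * (x - b) := by
  simp only [det2, parabolaPt]
  ring

theorem det2_parabolaPt_pos {a b x : ℝ} (hab : a < b) (hx : x < a ∨ b < x) :
    0 < det2 (parabolaPt a) (parabolaPt b) (parabolaPt x) := by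
  rw [det2_parabolaPt]
  rcases hx with hx | hx
  · exact mul_pos_of_neg_of_neg (mul_neg_of_pos_of_neg (by linarith) (by linarith)) (by linarith)
  · exact mul_pos (mul_pos (by linarith) (by linarith)) (by linarith)

theorem det2_parabolaPt_neg {a b x : ℝ} (ha : a < x) (hb : x < b) :
    det2 (parabolaPt a) (parabolaPt b) (parabolaPt x) < 0 := by
  rw [det2_parabolaPt]
  exact mul_neg_of_pos_of_neg (mul_pos (by linarith) (by linarith)) (by linarith)

theorem det2_parabolaPt_ne_zero {a b x : ℝ} (hab : a ≠ b) (hax : a ≠ x) (hbx : b ≠ x) :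
    det2 (parabolaPt a) (parabolaPt b) (parabolaPt x) ≠ 0 := by
  rw [det2_parabolaPt]
  exact mul_ne_zero (mul_ne_zero (sub_ne_zero.2 hab.symm) (sub_ne_zero.2 hax.symm))
    (sub_ne_zero.2 hbx.symm)

/-- The chords `{a, b}` and `{c, d}` of a convex polygon with vertices numbered in cyclic order
(`a < b`, `c < d`) cross exactly when their endpoints interleave. -/
def Interleave (a b c d : ℕ) : Prop :=
  a < c ∧ c < b ∧ b < d ∨ c < a ∧ a < d ∧ d < b

theorem segCross_parabolaPt_of_interleave {a b c d : ℕ} (h : Interleave a b c d) :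
    SegCross (parabolaPt a) (parabolaPt b) (parabolaPt c) (parabolaPt d) := by
  have key : ∀ {a b c d : ℕ}, a < c → c < b → b < d →
      SegCross (parabolaPt a) (parabolaPt b) (parabolaPt c) (parabolaPt d) := by
    intro a b c d hac hcb hbd
    have hac : (a : ℝ) < c := by exact_mod_cast hac
    have hcb : (c : ℝ) < b := by exact_mod_cast hcb
    have hbd : (b : ℝ) < d := by exact_mod_cast hbd
    exact segCross_of_det2 (det2_parabolaPt_neg hac hcb)
      (det2_parabolaPt_pos (hac.trans hcb) (.inr hbd))
      (det2_parabolaPt_pos (hcb.trans hbd) (.inl hac)) (det2_parabolaPt_neg hcb hbd)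
  rcases h with ⟨h1, h2, h3⟩ | ⟨h1, h2, h3⟩
  · exact key h1 h2 h3
  · exact (key h1 h2 h3).symm

theorem interleave_of_segCross_parabolaPt {a b c d : ℕ} (hab : a < b) (hcd : c < d)
    (hne : a ≠ c ∨ b ≠ d)
    (h : SegCross (parabolaPt a) (parabolaPt b) (parabolaPt c) (parabolaPt d)) :
    Interleave a b c d := by
  have hpos : ∀ x : ℕ, x < c ∨ d < x →
      0 < det2 (parabolaPt c) (parabolaPt d) (parabolaPt x) := fun x hx =>
    det2_parabolaPt_pos (by exact_mod_cast hcd) (by exact_mod_cast hx)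
  have hneg : ∀ x : ℕ, c < x → x < d →
      det2 (parabolaPt c) (parabolaPt d) (parabolaPt x) < 0 := fun x hc hd =>
    det2_parabolaPt_neg (by exact_mod_cast hc) (by exact_mod_cast hd)
  have hshared : ∀ x y z : ℕ, x ≠ y → x ≠ z → y ≠ z →
      ¬ SegCross (parabolaPt x) (parabolaPt y) (parabolaPt x) (parabolaPt z) :=
    fun x y z hxy hxz hyz => not_segCross_of_det2_ne_zero <| det2_parabolaPt_ne_zero
      (by exact_mod_cast hxy) (by exact_mod_cast hxz) (by exact_mod_cast hyz)
  have hsides := h.det2_mul_nonpos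
  rcases (by omega : ((a < c ∨ d < a) ∧ (b < c ∨ d < b)) ∨ (c < a ∧ a < d ∧ c < b ∧ b < d) ∨
      (a < c ∧ c < b ∧ b < d ∨ c < a ∧ a < d ∧ d < b) ∨ a = c ∨ a = d ∨ b = c ∨ b = d) with
    ⟨ha, hb⟩ | ⟨ha, ha', hb, hb'⟩ | h' | rfl | rfl | rfl | rfl
  · nlinarith [mul_pos (hpos a ha) (hpos b hb)]
  · nlinarith [mul_pos_of_neg_of_neg (hneg a ha ha') (hneg b hb hb')]
  · exact h'
  · exact (hshared _ _ _ (by omega) (by omega) (by omega) h).elim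
  · exact (hshared _ _ _ (by omega) (by omega) (by omega) h.swap_right).elim
  · exact (hshared _ _ _ (by omega) (by omega) (by omega) h.swap_left).elim
  · exact (hshared _ _ _ (by omega) (by omega) (by omega) h.swap_left.swap_right).elim

def parabolaDrawing (n : ℕ) (i : Fin n) : Pt := parabolaPt i

theorem genPos_parabolaDrawing (n : ℕ) : GenPos (parabolaDrawing n) := by
  refine ⟨fun i j h => Fin.ext ?_, ?_⟩
  · simpa [parabolaDrawing, parabolaPt] using congrArg Prod.fst h
  intro u v w huv huw hvw hcol
  refine det2_parabolaPt_ne_zero ?_ ?_ ?_ (det2_eq_zero_of_collinear hcol) <;>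
    simpa [Fin.val_inj] using ‹_›

theorem convexPos_parabolaDrawing (n : ℕ) : ConvexPos (parabolaDrawing n) := by
  have hepi : convexHull ℝ (Set.range (parabolaDrawing n)) ⊆ {y : Pt | y.1 ^ 2 ≤ y.2} := by
    refine convexHull_min ?_ ?_
    · rintro _ ⟨i, rfl⟩
      simp [parabolaDrawing, parabolaPt]
    · simpa using (even_two.convexOn_pow (𝕜 := ℝ)).convex_epigraph
  intro i
  set t : ℝ := ((i : ℕ) : ℝ)
  -- the point `(t, t²)` is the unique maximiser over the epigraph of `y ↦ 2 t y.1 - y.2`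
  refine exposedPoints_subset_extremePoints
    ⟨subset_convexHull ℝ _ ⟨i, rfl⟩, (2 * t) • ContinuousLinearMap.fst ℝ ℝ ℝ -
      ContinuousLinearMap.snd ℝ ℝ ℝ, fun y hy => ?_⟩
  have hy' : y.1 ^ 2 ≤ y.2 := hepi hy
  simp only [sub_apply, smul_apply,
    ContinuousLinearMap.coe_fst', ContinuousLinearMap.coe_snd', smul_eq_mul, parabolaDrawing,
    parabolaPt]
  refine ⟨by nlinarith [sq_nonneg (y.1 - t)], fun hle => ?_⟩
  have h1 : y.1 = t := by nlinarith [sq_nonneg (y.1 - t)]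
  exact Prod.ext h1 (by rw [h1] at hy' hle; dsimp only; nlinarith)

theorem EdgeCross.segCross {V : Type} {p : V → Pt} {u v x y : V}
    (h : EdgeCross p s(u, v) s(x, y)) : SegCross (p u) (p v) (p x) (p y) := by
  obtain ⟨u', v', x', y', he, hf, hs⟩ := h
  rcases Sym2.eq_iff.1 he with ⟨rfl, rfl⟩ | ⟨rfl, rfl⟩ <;>
    rcases Sym2.eq_iff.1 hf with ⟨rfl, rfl⟩ | ⟨rfl, rfl⟩
  exacts [hs, hs.swap_right, hs.swap_left, hs.swap_left.swap_right]

def chordGraph (n : ℕ) (E : ℕ → ℕ → Prop) : SimpleGraph (Fin n) :=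
  SimpleGraph.fromRel fun u v => u < v ∧ E u v

def sumColoring {k : ℕ} (n : ℕ) (col : ℕ → Fin k) : Sym2 (Fin n) → Fin k :=
  Sym2.lift ⟨fun u v => col (u + v), fun _ _ => congrArg col (add_comm _ _)⟩

section ChordDrawing

variable {n k : ℕ} {E : ℕ → ℕ → Prop} {col : ℕ → Fin k}

theorem chordGraph_adj_of_lt {u v : Fin n} (h : u < v) : (chordGraph n E).Adj u v ↔ E u v := by
  simp [chordGraph, h, h.ne, not_lt_of_gt h]

theorem exists_lt_of_mem_edgeSet_chordGraph {e : Sym2 (Fin n)} (he : e ∈ (chordGraph n E).edgeSet) :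
    ∃ u v : Fin n, u < v ∧ E u v ∧ e = s(u, v) := by
  induction e using Sym2.ind with
  | _ u v =>
    rcases (SimpleGraph.fromRel_adj _ u v).1 ((chordGraph n E).mem_edgeSet.1 he) with
      ⟨-, ⟨huv, h⟩ | ⟨hvu, h⟩⟩
    exacts [⟨u, v, huv, h, rfl⟩, ⟨v, u, hvu, h, Sym2.eq_swap⟩]

theorem crossingFree_chordGraph
    (h : ∀ a b c d : ℕ, b < n → d < n → Interleave a b c d → E a b → E c d →
      col (a + b) ≠ col (c + d)) :
    CrossingFree (chordGraph n E) (parabolaDrawing n) (sumColoring n col) := by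
  intro e he f hf hne hcol hcross
  obtain ⟨a, b, hab, hEab, rfl⟩ := exists_lt_of_mem_edgeSet_chordGraph he
  obtain ⟨c, d, hcd, hEcd, rfl⟩ := exists_lt_of_mem_edgeSet_chordGraph hf
  have hne' : (a : ℕ) ≠ c ∨ (b : ℕ) ≠ d := by
    by_contra! hac
    exact hne (by rw [Fin.ext hac.1, Fin.ext hac.2])
  exact h a b c d b.isLt d.isLt (interleave_of_segCross_parabolaPt hab hcd hne' hcross.segCross)
    hEab hEcd hcol

theorem precoloredSaturated_chordGraph
    (h : ∀ a b : ℕ, a < b → b < n → ¬ E a b → ∀ c : Fin k,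
      ∃ x y : ℕ, y < n ∧ Interleave a b x y ∧ E x y ∧ col (x + y) = c) :
    PrecoloredSaturated (chordGraph n E) (parabolaDrawing n) (sumColoring n col) := by
  intro u v huv hadj c
  wlog huv' : u < v generalizing u v
  · rw [Sym2.eq_swap]
    exact this v u huv.symm (by rwa [SimpleGraph.adj_comm]) (huv.symm.lt_of_le (not_lt.1 huv'))
  obtain ⟨x, y, hy, hI, hE, rfl⟩ :=
    h u v huv' v.isLt (fun hE => hadj ((chordGraph_adj_of_lt huv').2 hE)) c
  have hxy : x < y := by unfold Interleave at hI; omega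
  set x' : Fin n := ⟨x, hxy.trans hy⟩
  set y' : Fin n := ⟨y, hy⟩
  have hadj' : (chordGraph n E).Adj x' y' := (chordGraph_adj_of_lt (Fin.mk_lt_mk.2 hxy)).2 hE
  have hne : s(u, v) ≠ s(x', y') := fun heq =>
    hadj (by rw [← SimpleGraph.mem_edgeSet, heq]; exact hadj')
  intro hcf
  refine hcf s(u, v) (Or.inr ⟨rfl, huv⟩) s(x', y') (Or.inl hadj') hne ?_
    ⟨u, v, x', y', rfl, rfl, segCross_parabolaPt_of_interleave hI⟩
  simp only [if_neg hne.symm]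
  rfl

theorem ncard_edgeSet_chordGraph_le (T : Finset (ℕ × ℕ))
    (h : ∀ a b : ℕ, a < b → b < n → E a b → (a, b) ∈ T) :
    (chordGraph n E).edgeSet.ncard ≤ T.card := by
  rw [← Set.ncard_coe_finset T]
  refine Set.ncard_le_ncard_of_injOn (fun e : Sym2 (Fin n) => ((e.inf : ℕ), (e.sup : ℕ)))
    (fun e he => ?_) (fun e _ f _ hef => ?_)
  · obtain ⟨u, v, huv, hE, rfl⟩ := exists_lt_of_mem_edgeSet_chordGraph he
    simpa [min_eq_left huv.le, max_eq_right huv.le] using h u v huv v.isLt hE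
  · exact Sym2.inf_eq_inf_and_sup_eq_sup.1
      ⟨Fin.ext (congrArg Prod.fst hef), Fin.ext (congrArg Prod.snd hef)⟩

end ChordDrawing

def pathChords (n : ℕ) : Finset (ℕ × ℕ) :=
  (Finset.range (n - 1)).image fun a => (a, a + 1)

theorem card_pathChords_le (n : ℕ) : (pathChords n).card ≤ n - 1 :=
  Finset.card_image_le.trans (Finset.card_range _).le

theorem mem_pathChords {n a : ℕ} (h : a + 1 < n) : (a, a + 1) ∈ pathChords n :=
  Finset.mem_image.2 ⟨a, Finset.mem_range.2 (by omega), rfl⟩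

def FanChord (a b : ℕ) : Prop := a = 0 ∨ b = a + 1

theorem crossingFree_fan (n : ℕ) :
    CrossingFree (chordGraph n FanChord) (parabolaDrawing n) (sumColoring n fun _ => (0 : Fin 1)) :=
  crossingFree_chordGraph fun a b c d _ _ hI hab hcd _ => by
    unfold Interleave at hI; unfold FanChord at hab hcd; omega

theorem precoloredSaturated_fan (n : ℕ) :
    PrecoloredSaturated (chordGraph n FanChord) (parabolaDrawing n)
      (sumColoring n fun _ => (0 : Fin 1)) :=
  precoloredSaturated_chordGraph fun a b _ hbn hab c => by
    unfold FanChord at hab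
    exact ⟨0, a + 1, by omega, Or.inr ⟨by omega, by omega, by omega⟩, Or.inl rfl,
      Subsingleton.elim _ _⟩

theorem ncard_edgeSet_fan_le (n : ℕ) : (chordGraph n FanChord).edgeSet.ncard ≤ 2 * n - 3 := by
  refine (ncard_edgeSet_chordGraph_le (pathChords n ∪ (Finset.Ico 2 n).image fun b => (0, b))
    fun a b hab hbn h => ?_).trans ?_
  · by_cases hb : b = a + 1
    · exact Finset.mem_union_left _ (hb ▸ mem_pathChords (hb ▸ hbn))
    · obtain rfl : a = 0 := by unfold FanChord at h; omega
      exact Finset.mem_union_right _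
        (Finset.mem_image.2 ⟨b, Finset.mem_Ico.2 ⟨by omega, hbn⟩, rfl⟩)
  · refine (Finset.card_union_le _ _).trans ?_
    have := card_pathChords_le n
    have : ((Finset.Ico 2 n).image fun b => ((0 : ℕ), b)).card ≤ n - 2 :=
      Finset.card_image_le.trans (by simp)
    omega

/-- A boundary edge of the `n`-gon, or a chord whose vertex sum is `0, 1, …, k + 1` modulo `n`. -/
def SumClassChord (n k a b : ℕ) : Prop :=
  b = a + 1 ∨ (a = 0 ∧ b = n - 1) ∨ a + b ≤ k + 1 ∨ (n ≤ a + b ∧ a + b ≤ n + k + 1)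

/-- Sum class `t` modulo `n` gets colour `t - 1`, except that the classes `0, 1` share colour `0`
and the classes `k, k + 1` share colour `k - 1`: chords with equal vertex sum are parallel, and
two consecutive sum classes form a zigzag path, so no colour class has a crossing. -/
def sumClassColor (n k : ℕ) (hk : 0 < k) (t : ℕ) : Fin k :=
  ⟨min ((if n ≤ t then t - n else t) - 1) (k - 1), by omega⟩

theorem crossingFree_sumClass {n k : ℕ} (hk : 2 ≤ k) :
    CrossingFree (chordGraph n (SumClassChord n k)) (parabolaDrawing n)
      (sumColoring n (sumClassColor n k (by omega))) :=
  crossingFree_chordGraph fun a b c d hbn hdn hI hab hcd hcol => by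
    unfold Interleave at hI
    unfold SumClassChord at hab hcd
    simp only [sumClassColor, Fin.mk.injEq] at hcol
    split_ifs at hcol <;> omega

/-- The blocking chord is usually the one of sum class `s` through `a + 1`; when that one is
nested inside `ab`, it is its neighbour through `a - 1`, or the chord from `s + 1` to `n - 1` if
`a = 0`. -/
theorem exists_interleave_sum_eq {n k a b s : ℕ} (hab : a < b) (hbn : b < n)
    (hs : 1 ≤ s) (hsk : s ≤ k) (h : ¬ SumClassChord n k a b) :
    ∃ x y : ℕ, y < n ∧ Interleave a b x y ∧ (x + y = s ∨ x + y = n + s) := by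
  unfold SumClassChord at h
  unfold Interleave
  -- `r` is the partner of `a + 1` in sum class `s`
  obtain ⟨r, hr⟩ : ∃ r, r = if a + 1 ≤ s then s - a - 1 else n + s - a - 1 := ⟨_, rfl⟩
  by_cases h1 : r < a
  · exact ⟨r, a + 1, by omega, by split_ifs at hr <;> omega⟩
  by_cases h2 : b < r
  · exact ⟨a + 1, r, by split_ifs at hr <;> omega, by split_ifs at hr <;> omega⟩
  by_cases h3 : 1 ≤ a
  · exact ⟨a - 1, r + 2, by split_ifs at hr <;> omega, by split_ifs at hr <;> omega⟩
  · exact ⟨s + 1, n - 1, by omega, by split_ifs at hr <;> omega⟩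

theorem precoloredSaturated_sumClass {n k : ℕ} (hk : 0 < k) (hkn : k < n) :
    PrecoloredSaturated (chordGraph n (SumClassChord n k)) (parabolaDrawing n)
      (sumColoring n (sumClassColor n k hk)) :=
  precoloredSaturated_chordGraph fun a b hab hbn h c => by
    obtain ⟨x, y, hyn, hI, hxy⟩ :=
      exists_interleave_sum_eq (s := c + 1) hab hbn (by omega) (by omega) h
    refine ⟨x, y, hyn, hI, by unfold SumClassChord; omega, Fin.ext ?_⟩
    simp only [sumClassColor]
    split_ifs <;> omega

def sumClassChords (n s : ℕ) : Finset (ℕ × ℕ) :=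
  (Finset.range n ×ˢ Finset.range n).filter fun p =>
    p.1 < p.2 ∧ (p.1 + p.2 = s ∨ p.1 + p.2 = n + s) ∧ p.2 ≠ p.1 + 1 ∧ ¬(p.1 = 0 ∧ p.2 = n - 1)

/-- A sum class has at most `(n - 2) / 2` inner chords, and at most `(n - 3) / 2` if `s` is odd. -/
theorem two_mul_card_sumClassChords_add_le {n s : ℕ} (hn : 3 ≤ n) (hs : 2 * s ≤ n + 2) :
    2 * (sumClassChords n s).card + s % 2 ≤ n - 2 := by
  -- index the chords with `a + b = s` by `a`, and those with `a + b = n + s` by `a - ⌈s/2⌉ - 1`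
  have := Finset.card_le_card_of_injOn
    (fun p : ℕ × ℕ => if p.1 + p.2 = s then p.1 else p.1 - (s + 1) / 2 - 1)
    (s := sumClassChords n s) (t := Finset.range ((n - 2 - s % 2) / 2))
    (fun p hp => ?_) (fun p hp q hq hpq => ?_)
  · simp only [Finset.card_range] at this
    omega
  · simp only [sumClassChords, Finset.coe_filter, Finset.mem_product, Finset.mem_range,
      Set.mem_ofPred_eq] at hp
    simp only [Finset.coe_range, Set.mem_Iio]
    split_ifs <;> omega
  · simp only [sumClassChords, Finset.coe_filter, Finset.mem_product, Finset.mem_range,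
      Set.mem_ofPred_eq] at hp hq
    dsimp only at hpq
    split_ifs at hpq <;> exact Prod.ext (by omega) (by omega)

theorem two_mul_sum_range_le {f : ℕ → ℕ} {M : ℕ} (m : ℕ)
    (h : ∀ s < m, 2 * f s + s % 2 ≤ M + 1) :
    2 * ∑ s ∈ Finset.range m, f s ≤ m * M + m % 2 := by
  induction m using Nat.twoStepInduction with
  | zero => simp
  | one => simpa using h 0 one_pos
  | more m ih _ =>
    have h0 := h m (by omega)
    have h1 := h (m + 1) (by omega)
    have := ih fun s hs => h s (by omega)
    rw [Finset.sum_range_succ, Finset.sum_range_succ]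
    have hpair : f m + f (m + 1) ≤ M := by omega
    have : (m + 2) % 2 = m % 2 := by omega
    have : (m + 2) * M = m * M + 2 * M := by ring
    linarith

theorem mem_sumClassChords_biUnion {n k a b : ℕ} (hab : a < b) (hbn : b < n)
    (h : SumClassChord n k a b) (hpath : b ≠ a + 1) (hhull : ¬(a = 0 ∧ b = n - 1)) :
    (a, b) ∈ (Finset.range (k + 2)).biUnion (sumClassChords n) := by
  unfold SumClassChord at h
  simp only [Finset.mem_biUnion, Finset.mem_range, sumClassChords, Finset.mem_filter,
    Finset.mem_product]
  by_cases hs : a + b < n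
  · exact ⟨a + b, by omega, by omega⟩
  · exact ⟨a + b - n, by omega, by omega⟩

theorem two_mul_ncard_edgeSet_sumClass_le {n k : ℕ} (hk : 2 ≤ k) (hkn : 2 * k ≤ n) :
    2 * (chordGraph n (SumClassChord n k)).edgeSet.ncard ≤ (k + 4) * (n - 2) := by
  set S := ∑ s ∈ Finset.range (k + 2), (sumClassChords n s).card
  have hedges : (chordGraph n (SumClassChord n k)).edgeSet.ncard ≤ n + S := by
    refine (ncard_edgeSet_chordGraph_le
      (pathChords n ∪ {(0, n - 1)} ∪ (Finset.range (k + 2)).biUnion (sumClassChords n))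
      fun a b hab hbn h => ?_).trans ?_
    · by_cases hpath : b = a + 1
      · exact Finset.mem_union_left _
          (Finset.mem_union_left _ (hpath ▸ mem_pathChords (hpath ▸ hbn)))
      by_cases hhull : a = 0 ∧ b = n - 1
      · obtain ⟨rfl, rfl⟩ := hhull
        exact Finset.mem_union_left _ (Finset.mem_union_right _ (Finset.mem_singleton_self _))
      exact Finset.mem_union_right _ (mem_sumClassChords_biUnion hab hbn h hpath hhull)
    · calc _ ≤ (pathChords n ∪ {(0, n - 1)}).card +
              ((Finset.range (k + 2)).biUnion (sumClassChords n)).card :=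
            Finset.card_union_le _ _
        _ ≤ ((pathChords n).card + 1) + S :=
            add_le_add (Finset.card_union_le _ _) Finset.card_biUnion_le
        _ ≤ n + S := by have := card_pathChords_le n; omega
  have hS : 2 * S ≤ (k + 2) * (n - 3) + (k + 2) % 2 :=
    two_mul_sum_range_le (f := fun s => (sumClassChords n s).card) _ fun s hs => by
      have := two_mul_card_sumClassChords_add_le (n := n) (s := s) (by omega) (by omega)
      omega
  obtain ⟨m, rfl⟩ : ∃ m, n = m + 3 := ⟨n - 3, by omega⟩
  simp only [Nat.add_sub_cancel] at hS ⊢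
  have : (k + 4) * (m + 3 - 2) = (k + 2) * m + 2 * m + k + 4 := by
    rw [show m + 3 - 2 = m + 1 by omega]; ring
  omega

theorem exists_saturated_convex_drawing {n k : ℕ} (hn : 4 ≤ n) (hk : 1 ≤ k) (hkn : 2 * k ≤ n) :
    ∃ (G : SimpleGraph (Fin n)) (p : Fin n → Pt) (φ : Sym2 (Fin n) → Fin k),
      GenPos p ∧ ConvexPos p ∧ CrossingFree G p φ ∧ PrecoloredSaturated G p φ ∧
      2 * G.edgeSet.ncard ≤ (k + 4) * (n - 2) := by
  obtain rfl | hk := hk.eq_or_lt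
  · refine ⟨_, _, _, genPos_parabolaDrawing n, convexPos_parabolaDrawing n, crossingFree_fan n,
      precoloredSaturated_fan n, ?_⟩
    have := ncard_edgeSet_fan_le n
    omega
  · exact ⟨_, _, _, genPos_parabolaDrawing n, convexPos_parabolaDrawing n,
      crossingFree_sumClass hk, precoloredSaturated_sumClass _ (by omega),
      two_mul_ncard_edgeSet_sumClass_le hk hkn⟩

theorem stmt1_general (n k : ℕ) (hn : 5 ≤ n) (hk : 1 ≤ k) (hkn : 2 * k ≤ n)
    (G : SimpleGraph (Fin n))
    (hmin : ∀ (G' : SimpleGraph (Fin n)) (p' : Fin n → Pt)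
        (φ' : Sym2 (Fin n) → Fin k),
        GenPos p' → ConvexPos p' → CrossingFree G' p' φ' →
        PrecoloredSaturated G' p' φ' →
        G.edgeSet.ncard ≤ G'.edgeSet.ncard) :
    2 * (G.edgeSet.ncard : ℤ) ≤ ((k : ℤ) + 4) * ((n : ℤ) - 2) := by
  obtain ⟨G', p', φ', hgen, hconv, hφ, hsat, hcard⟩ :=
    exists_saturated_convex_drawing (by omega) hk hkn
  have hle := hmin G' p' φ' hgen hconv hφ hsat
  zify [show 2 ≤ n by omega] at hle hcard
  linarith

/-- Every min-saturated convex precolored Θ^k-drawing of a graph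
on `n ≥ 5` vertices (with `k ≤ n/2`) has at most `(k+4)(n-2)/2` edges. -/
theorem stmt1 (n k : ℕ) (hn : 5 ≤ n) (hk : 1 ≤ k) (hkn : 2 * k ≤ n)
    (G : SimpleGraph (Fin n)) (p : Fin n → Pt) (φ : Sym2 (Fin n) → Fin k)
    (hgen : GenPos p) (hconv : ConvexPos p)
    (hφ : CrossingFree G p φ) (hsat : PrecoloredSaturated G p φ)
    (hmin : ∀ (G' : SimpleGraph (Fin n)) (p' : Fin n → Pt)
        (φ' : Sym2 (Fin n) → Fin k),
        GenPos p' → ConvexPos p' → CrossingFree G' p' φ' →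
        PrecoloredSaturated G' p' φ' →
        G.edgeSet.ncard ≤ G'.edgeSet.ncard) :
    2 * (G.edgeSet.ncard : ℤ) ≤ ((k : ℤ) + 4) * ((n : ℤ) - 2) :=
  stmt1_general n k hn hk hkn G hmin
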